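/- arXiv:1906.04394 — 2 statements merged into one kernel-verified Lean document; each statement's English description precedes it below -/
import Mathlib

section
/- For every f in BV(T) ∩ H^{-1}_av(T), one has ||f||_{H^{-1}_av(T)} ≤ (1/(2π)) ∫_T |Df|, i.e., the H^{-1}_av norm is bounded by 1/(2π) times the total variation of f. -/
/-!
A mean-zero function takes both signs on `[0, 1]`, so every value lies within the total
variation `V` of a nonpositive and of a nonnegative value, whence `|f| ≤ V`. By Parseval
`∑ |c ξ|² = ∫₀¹ |f|² ≤ V²`, and dividing the terms with `ξ ≠ 0` by `ξ² ≥ 1` only decreases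
the sum.
-/

open Real MeasureTheory Set

theorem BoundedVariationOn.abs_le_of_setIntegral_eq_zero {α : Type*} [LinearOrder α]
    [MeasurableSpace α] {μ : Measure α} {s : Set α} [IsFiniteMeasure (μ.restrict s)]
    {f : α → ℝ} (hf : BoundedVariationOn f s) (hs : MeasurableSet s) (hμs : μ s ≠ 0)
    (hfi : IntegrableOn f s μ) (hmean : ∫ x in s, f x ∂μ = 0) {x : α} (hx : x ∈ s) :
    |f x| ≤ (eVariationOn f s).toReal := by
  have hμ : μ.restrict s ≠ 0 := by simpa [Measure.restrict_eq_zero] using hμs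
  have hnull : μ.restrict s sᶜ = 0 := by
    rw [Measure.restrict_apply hs.compl, compl_inter_self, measure_empty]
  have havg : ⨍ y in s, f y ∂μ = 0 := by rw [setAverage_eq, hmean, smul_zero]
  obtain ⟨y, hy, hfy⟩ := exists_notMem_null_le_average hμ hfi hnull
  obtain ⟨z, hz, hfz⟩ := exists_notMem_null_average_le hμ hfi hnull
  rw [havg] at hfy hfz
  rw [notMem_compl_iff] at hy hz
  exact abs_le.2 ⟨by linarith [hf.sub_le hz hx], by linarith [hf.sub_le hx hy]⟩

theorem tsum_ne_zero_div_sq_le_tsum {u : ℤ → ℝ} (hu : Summable u) (hu0 : 0 ≤ u) :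
    ∑' n : {n : ℤ // n ≠ 0}, u n / (n : ℝ) ^ 2 ≤ ∑' n, u n := by
  have hle : ∀ n : {n : ℤ // n ≠ 0}, u n / (n : ℝ) ^ 2 ≤ u n := fun n =>
    div_le_self (hu0 n) (one_le_sq_iff_one_le_abs _ |>.2 (by exact_mod_cast Int.one_le_abs n.2))
  calc ∑' n : {n : ℤ // n ≠ 0}, u n / (n : ℝ) ^ 2
      ≤ ∑' n : {n : ℤ // n ≠ 0}, u n :=
        (Summable.of_nonneg_of_le (fun n : {n : ℤ // n ≠ 0} => div_nonneg (hu0 n) (sq_nonneg _))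
          hle (hu.subtype _)).tsum_le_tsum hle (hu.subtype _)
    _ ≤ ∑' n, u n := hu.tsum_subtype_le _ _ hu0

theorem tsum_sq_fourierCoeffOn_div_sq_le_sq {a b : ℝ} (hab : a < b) {f : ℝ → ℂ} {C : ℝ}
    (hf : AEStronglyMeasurable f (volume.restrict (Ioc a b))) (hC : ∀ x ∈ Ioc a b, ‖f x‖ ≤ C) :
    ∑' n : {n : ℤ // n ≠ 0}, ‖fourierCoeffOn hab f n‖ ^ 2 / (n : ℝ) ^ 2 ≤ C ^ 2 := by
  have hL2 : MemLp f 2 (volume.restrict (Ioc a b)) :=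
    MemLp.of_bound hf C (ae_restrict_of_forall_mem measurableSet_Ioc hC)
  have hparseval := hasSum_sq_fourierCoeffOn hab hL2
  have hnorm_sq : ∫ x in a..b, ‖f x‖ ^ 2 ≤ C ^ 2 * (b - a) := by
    have := intervalIntegral.norm_integral_le_of_norm_le_const (a := a) (b := b)
      (f := fun x => ‖f x‖ ^ 2) (C := C ^ 2) fun x hx => by
        rw [uIoc_of_le hab.le] at hx
        simpa using pow_le_pow_left₀ (norm_nonneg _) (hC x hx) 2
    rw [abs_of_pos (sub_pos.2 hab)] at this
    exact (le_abs_self _).trans this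
  calc ∑' n : {n : ℤ // n ≠ 0}, ‖fourierCoeffOn hab f n‖ ^ 2 / (n : ℝ) ^ 2
      ≤ ∑' n, ‖fourierCoeffOn hab f n‖ ^ 2 :=
        tsum_ne_zero_div_sq_le_tsum hparseval.summable fun n => sq_nonneg _
    _ = (b - a)⁻¹ * ∫ x in a..b, ‖f x‖ ^ 2 := hparseval.tsum_eq
    _ ≤ C ^ 2 := by
        rw [inv_mul_le_iff₀ (sub_pos.2 hab)]; linarith [hnorm_sq]

theorem fourierCoeffOn_zero_one_eq_integral (g : ℝ → ℂ) (n : ℤ) :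
    fourierCoeffOn one_pos g n =
      ∫ x in (0:ℝ)..1, g x * Complex.exp (-2 * π * Complex.I * n * x) := by
  rw [fourierCoeffOn_eq_integral]
  simp only [sub_zero, div_one, one_smul, smul_eq_mul]
  refine intervalIntegral.integral_congr fun x _ => ?_
  rw [fourier_coe_apply, mul_comm]
  push_cast
  ring_nf

theorem stmt2_general (f : ℝ → ℝ)
    (hint : IntegrableOn f (Set.Icc 0 1))
    (hmean : ∫ x in Set.Icc (0:ℝ) 1, f x = 0)
    (hBV : eVariationOn f (Set.Icc 0 1) ≠ ⊤)
    (c : ℤ → ℂ)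
    (hc : ∀ ξ : ℤ, c ξ =
      ∫ x in (0:ℝ)..1, (f x : ℂ) * Complex.exp (-2 * π * Complex.I * (ξ : ℂ) * (x : ℂ))) :
    Real.sqrt (∑' ξ : {ξ : ℤ // ξ ≠ 0},
        (1 / (4 * π ^ 2)) * (‖c ξ‖ ^ 2 / ((ξ : ℤ) : ℝ) ^ 2)) ≤
      (1 / (2 * π)) * (eVariationOn f (Set.Icc 0 1)).toReal := by
  set V := (eVariationOn f (Icc 0 1)).toReal
  have hc_eq : c = fourierCoeffOn one_pos (fun x => (f x : ℂ)) :=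
    funext fun ξ => (hc ξ).trans (fourierCoeffOn_zero_one_eq_integral _ ξ).symm
  have hbound : ∀ x ∈ Ioc (0:ℝ) 1, ‖(f x : ℂ)‖ ≤ V := fun x hx => by
    rw [Complex.norm_real, Real.norm_eq_abs]
    exact BoundedVariationOn.abs_le_of_setIntegral_eq_zero hBV measurableSet_Icc (by simp)
      hint hmean (Ioc_subset_Icc_self hx)
  have hmeas : AEStronglyMeasurable (fun x => (f x : ℂ)) (volume.restrict (Ioc 0 1)) :=
    Complex.continuous_ofReal.comp_aestronglyMeasurable
      (hint.mono_set Ioc_subset_Icc_self).aestronglyMeasurable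
  have hsum : ∑' ξ : {ξ : ℤ // ξ ≠ 0}, ‖c ξ‖ ^ 2 / ((ξ : ℤ) : ℝ) ^ 2 ≤ V ^ 2 := by
    rw [hc_eq]
    exact tsum_sq_fourierCoeffOn_div_sq_le_sq one_pos hmeas hbound
  have hrhs : 1 / (2 * π) * V = √(1 / (4 * π ^ 2) * V ^ 2) := by
    rw [show 1 / (4 * π ^ 2) * V ^ 2 = (1 / (2 * π) * V) ^ 2 by ring,
      Real.sqrt_sq (by positivity)]
  rw [tsum_mul_left, hrhs]
  exact Real.sqrt_le_sqrt (by gcongr)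

/-- For `f ∈ BV(𝕋) ∩ H⁻¹_av(𝕋)` (here: a 1-periodic function of
bounded variation on `[0,1]` with zero mean), the `H⁻¹_av` norm, expressed via the
Fourier coefficients `c ξ = ∫_0^1 f(x) e^{-2πiξx} dx`, is bounded by `1/(2π)` times
the total variation of `f`. -/
theorem stmt2 (f : ℝ → ℝ)
    (hper : Function.Periodic f 1)
    (hint : IntegrableOn f (Set.Icc 0 1))
    (hmean : ∫ x in Set.Icc (0:ℝ) 1, f x = 0)
    (hBV : eVariationOn f (Set.Icc 0 1) ≠ ⊤)
    (c : ℤ → ℂ)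
    (hc : ∀ ξ : ℤ, c ξ =
      ∫ x in (0:ℝ)..1, (f x : ℂ) * Complex.exp (-2 * π * Complex.I * (ξ : ℂ) * (x : ℂ))) :
    Real.sqrt (∑' ξ : {ξ : ℤ // ξ ≠ 0},
        (1 / (4 * π ^ 2)) * (‖c ξ‖ ^ 2 / ((ξ : ℤ) : ℝ) ^ 2)) ≤
      (1 / (2 * π)) * (eVariationOn f (Set.Icc 0 1)).toReal :=
  stmt2_general f hint hmean hBV c hc
end

section
/- Let N ≥ 2 and let A_N ∈ R^{(N-1)×(N-1)} be the matrix A_N = L_N S_N^T S_N R_N, where S_N is the N×N cyclic difference matrix with (S_N)_{n,n}=1, (S_N)_{n,n-1}=-1 (indices mod N), R_N ∈ R^{N×(N-1)} has the identity in its first N-1 rows and last row all entries -1, and L_N ∈ R^{(N-1)×N} has entries (L_N)_{i,j} = δ_{ij} - 1/N. Then det A_N = N^2; in particular A_N is invertible. -/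
open Matrix

/-- The cyclic difference matrix `S_N`: `1` on the diagonal, `-1` on the cyclic
subdiagonal (including position `(1,N)`). -/
def Smat (N : ℕ) : Matrix (Fin N) (Fin N) ℝ :=
  Matrix.of fun i j =>
    if i = j then 1 else if (j : ℕ) = ((i : ℕ) + N - 1) % N then -1 else 0

/-- `R_N ∈ ℝ^{N×(N-1)}`: identity in the first `N-1` rows, last row all `-1`. -/
def Rmat (N : ℕ) : Matrix (Fin N) (Fin (N - 1)) ℝ :=
  Matrix.of fun i j =>
    if (i : ℕ) = N - 1 then -1 else if (i : ℕ) = (j : ℕ) then 1 else 0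

/-- `L_N ∈ ℝ^{(N-1)×N}` with entries `δ_{ij} - 1/N`. -/
noncomputable def Lmat (N : ℕ) : Matrix (Fin (N - 1)) (Fin N) ℝ :=
  Matrix.of fun i j => (if (i : ℕ) = (j : ℕ) then 1 else 0) - 1 / (N : ℝ)

/-!
Write `J` for the all-ones matrix and `K = SᵀS`. Since `L R = 1` and `R L = 1 - J/N`, Sylvester's
identity `det (1 + X Y) = det (1 + Y X)` turns `det (L K R)` into `det (K + J/N)`. The rows and
columns of `S` sum to zero, so `K + J/N = (S + J/N)ᵀ (S + J/N)`, and `det (S + c J) = c N²`: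
replacing the first row by the sum of all rows makes it constant `c N`, after which the other rows
reduce to those of `S`, and expanding along the first row leaves `N` times a unitriangular minor.
-/

namespace Matrix

variable {α : Type*} [CommRing α] {m n p : Type*}

theorem det_mul_mul_eq_det_add_sub_mul [Fintype m] [Fintype n] [DecidableEq m] [DecidableEq n]
    {L : Matrix m n α} {R : Matrix n m α} (K : Matrix n n α) (hLR : L * R = 1)
    (hK : K * (R * L) = K) :
    (L * K * R).det = (K + (1 - R * L)).det := by
  have h1 : L * K * R = 1 + L * ((K - 1) * R) := by
    rw [Matrix.sub_mul, Matrix.one_mul, Matrix.mul_sub, hLR, Matrix.mul_assoc, add_sub_cancel]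
  have h2 : 1 + (K - 1) * R * L = K + (1 - R * L) := by
    rw [Matrix.sub_mul, Matrix.sub_mul, Matrix.mul_assoc, hK, Matrix.one_mul]; abel
  rw [h1, det_one_add_mul_comm, Matrix.mul_assoc, ← Matrix.mul_assoc (K - 1), h2]

theorem mul_of_const_eq_zero [Fintype n] {M : Matrix m n α} (h : ∀ i, ∑ j, M i j = 0) (c : α) :
    M * (of fun _ _ => c : Matrix n p α) = 0 := by
  ext i k; simp [mul_apply, ← Finset.sum_mul, h]

theorem transpose_add_of_const_mul_self [Fintype m] {M : Matrix m n α}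
    (h : ∀ j, ∑ i, M i j = 0) (c : α) :
    (M + of fun _ _ => c)ᵀ * (M + of fun _ _ => c) =
      Mᵀ * M + of fun _ _ => Fintype.card m * c * c := by
  ext j k
  simp [mul_apply, add_mul, mul_add, Finset.sum_add_distrib, ← Finset.mul_sum, ← Finset.sum_mul, h]
  ring

theorem det_updateRow_zero_one {k : ℕ} (M : Matrix (Fin (k + 1)) (Fin (k + 1)) α)
    (hrow : ∀ i, ∑ j, M i j = 0) :
    (M.updateRow 0 fun _ => 1).det = (k + 1) * (M.submatrix Fin.succ Fin.succ).det := by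
  rw [det_eq_sum_row_mul_submatrix_succAbove_succAbove_det _ 0 0, submatrix_updateRow_succAbove]
  · simp
  · intro i hi
    simpa [updateRow_ne hi] using hrow i

theorem det_add_of_const {k : ℕ} (M : Matrix (Fin (k + 1)) (Fin (k + 1)) α)
    (hrow : ∀ i, ∑ j, M i j = 0) (hcol : ∀ j, ∑ i, M i j = 0) (c : α) :
    (M + of fun _ _ => c).det = c * (k + 1) ^ 2 * (M.submatrix Fin.succ Fin.succ).det := by
  set B : Matrix (Fin (k + 1)) (Fin (k + 1)) α := M + of fun _ _ => c
  have hsum : ∑ i, (1 : α) • B i = ((k + 1) * c) • fun _ => 1 := by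
    ext j; rw [Finset.sum_apply]; simp [B, Finset.sum_add_distrib, hcol]
  have hshift : (B.updateRow 0 fun _ => 1).det = (M.updateRow 0 fun _ => 1).det := by
    refine det_eq_of_forall_row_eq_smul_add_const (fun i => if i = 0 then 0 else c) 0 (by simp) ?_
    intro i j
    rcases eq_or_ne i 0 with rfl | hi
    · simp
    · simp [B, hi, add_comm]
  calc B.det = (B.updateRow 0 (∑ i, (1 : α) • B i)).det := by rw [det_updateRow_sum, one_smul]
    _ = c * (k + 1) ^ 2 * (M.submatrix Fin.succ Fin.succ).det := by
        rw [hsum, det_updateRow_smul, hshift, det_updateRow_zero_one M hrow]; ring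

end Matrix

theorem Smat_apply (n : ℕ) (i j : Fin (n + 2)) :
    Smat (n + 2) i j = (if i = j then 1 else 0) - if i = j + 1 then 1 else 0 := by
  -- `(i + (n + 2) - 1) % (n + 2)` is the value of `i + Fin.last (n + 1) = i - 1`
  have hpred : i = j + 1 ↔ (j : ℕ) = ((i : ℕ) + (n + 2) - 1) % (n + 2) := by
    rw [← Fin.neg_last, ← sub_eq_add_neg, eq_sub_iff_add_eq, eq_comm, Fin.ext_iff, Fin.val_add,
      Fin.val_last, Nat.add_sub_assoc (by omega)]
    rfl
  by_cases hij : i = j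
  · subst hij
    simp [Smat]
  · simp only [Smat, of_apply, hij, hpred, if_false]
    split_ifs <;> norm_num

theorem Smat_row_sum (n : ℕ) (i : Fin (n + 2)) : ∑ j, Smat (n + 2) i j = 0 := by
  simp [Smat_apply, Finset.sum_sub_distrib, ← sub_eq_iff_eq_add]

theorem Smat_col_sum (n : ℕ) (j : Fin (n + 2)) : ∑ i, Smat (n + 2) i j = 0 := by
  simp [Smat_apply, Finset.sum_sub_distrib]

theorem det_Smat_submatrix_succ (n : ℕ) :
    ((Smat (n + 2)).submatrix Fin.succ Fin.succ).det = 1 := by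
  rw [det_of_isLowerTriangular]
  · simp [Smat_apply]
  · intro i j (hij : i < j)
    have h1 : i.succ ≠ j.succ := by simpa using hij.ne
    have h2 : i.succ ≠ j.succ + 1 := by
      rw [Ne, Fin.ext_iff, Fin.val_add_one]
      split_ifs <;> simp; omega
    simp [Smat_apply, h1, h2]

theorem Rmat_apply (n : ℕ) (k : Fin (n + 1)) (j : Fin n) :
    Rmat (n + 1) k j = (if k = j.castSucc then 1 else 0) - if k = Fin.last n then 1 else 0 := by
  by_cases hk : k = Fin.last n
  · simp [Rmat, hk, (Fin.castSucc_ne_last j).symm]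
  · have hk' : (k : ℕ) ≠ n := fun h => hk (Fin.ext h)
    simp [Rmat, hk, hk', Fin.ext_iff]

theorem Lmat_apply (n : ℕ) (i : Fin n) (k : Fin (n + 1)) :
    Lmat (n + 1) i k = (if k = i.castSucc then 1 else 0) - ((n + 1 : ℕ) : ℝ)⁻¹ := by
  simp [Lmat, Fin.ext_iff, eq_comm]

theorem Rmat_col_sum (n : ℕ) (j : Fin n) : ∑ k, Rmat (n + 1) k j = 0 := by
  simp [Rmat_apply, Finset.sum_sub_distrib]

theorem Lmat_mul_Rmat (n : ℕ) : Lmat (n + 1) * Rmat (n + 1) = 1 := by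
  ext i j
  simp [mul_apply, Lmat_apply, sub_mul, Finset.sum_sub_distrib, ← Finset.mul_sum, Rmat_col_sum]
  simp [Rmat_apply, one_apply, Fin.castSucc_ne_last]

theorem Rmat_mul_Lmat (n : ℕ) :
    Rmat (n + 1) * Lmat (n + 1) = 1 - of fun _ _ => ((n + 1 : ℕ) : ℝ)⁻¹ := by
  ext k l
  induction k using Fin.lastCases with
  | last =>
    have hcount : ∑ x : Fin n, (if l = x.castSucc then (1 : ℝ) else 0) =
        1 - if l = Fin.last n then 1 else 0 := by
      have := Fin.sum_univ_castSucc fun x => if l = x then (1 : ℝ) else 0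
      simp only [Finset.sum_ite_eq, Finset.mem_univ, if_true] at this
      linarith
    simp [mul_apply, Lmat_apply, Rmat_apply, one_apply, (Fin.castSucc_ne_last _).symm,
      Finset.sum_sub_distrib, hcount, eq_comm]
    field_simp
    ring
  | cast k =>
    simp [mul_apply, Lmat_apply, Rmat_apply, one_apply, eq_comm]

/-- `det (L_N S_Nᵀ S_N R_N) = N²`; in particular `A_N` is invertible. -/
theorem stmt4 (N : ℕ) (hN : 2 ≤ N) :
    (Lmat N * (Smat N)ᵀ * Smat N * Rmat N).det = (N : ℝ) ^ 2 := by
  obtain ⟨n, rfl⟩ : ∃ n, N = n + 2 := ⟨N - 2, by omega⟩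
  set S := Smat (n + 2)
  set J : Matrix (Fin (n + 2)) (Fin (n + 2)) ℝ := of fun _ _ => ((n + 2 : ℕ) : ℝ)⁻¹
  have hRL : Rmat (n + 2) * Lmat (n + 2) = 1 - J := Rmat_mul_Lmat (n + 1)
  have hK : Sᵀ * S * (Rmat (n + 2) * Lmat (n + 2)) = Sᵀ * S := by
    rw [hRL, Matrix.mul_sub, Matrix.mul_one, Matrix.mul_assoc,
      mul_of_const_eq_zero (Smat_row_sum n), Matrix.mul_zero, sub_zero]
  have hfactor : Sᵀ * S + J = (S + J)ᵀ * (S + J) := by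
    rw [transpose_add_of_const_mul_self (Smat_col_sum n)]
    congr 1; ext; simp [J]; field_simp
  have hdet : (S + J).det = n + 2 := by
    rw [det_add_of_const S (Smat_row_sum n) (Smat_col_sum n), det_Smat_submatrix_succ]
    push_cast; field_simp; ring
  rw [Matrix.mul_assoc (Lmat _), det_mul_mul_eq_det_add_sub_mul _ (Lmat_mul_Rmat (n + 1)) hK, hRL,
    sub_sub_cancel, hfactor, det_mul, det_transpose, hdet]
  push_cast; ring
end
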